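/- arXiv:1411.5470 — 5 statements merged into one kernel-verified Lean document; each statement's English description precedes it below -/
import Mathlib

section
/- There exists a constant c > 0 (depending on η, β > 0) such that for all sufficiently large t > 0, ∫_{|ξ| ≤ r₀} |ξ|^{2k} | e^{-η|ξ|² t} cos(2√(2/3)|ξ| t) - e^{-β|ξ|² t} |² dξ ≥ c (1+t)^{-3/2 - k}, for any fixed k ≥ 0 and r₀ > 0. -/
/-!
On the shell `1/(2√t) ≤ |ξ| ≤ 1/√t` the damping factor `e^{-β|ξ|²t}` is at least `e^{-β}`, and
wherever `cos (2√(2/3)|ξ|t) ≤ 0` the difference is at least `e^{-β|ξ|²t}` in absolute value.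
In the radial variable the cosine has period `O(1/t)`, much shorter than the width `1/(2√t)` of
the shell, so for large `t` it is nonpositive on at least a quarter of the shell. In polar
coordinates the shell therefore contributes at least a constant times
`(1/√t)^{2k+2} · (1/√t) = t^{-3/2-k}`.
-/

open MeasureTheory Set Real Metric

theorem volume_Icc_cos_nonpos_ge (ω A B : ℝ) (hω : 0 < ω) :
    ENNReal.ofReal ((B - A - π / ω) / 2) ≤ volume {r ∈ Icc A B | cos (ω * r) ≤ 0} := by
  set δ := π / ω
  set E := {r ∈ Icc A B | cos (ω * r) ≤ 0}
  have hδ : 0 < δ := div_pos pi_pos hω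
  -- shifting by `δ` flips the sign of `cos (ω r)`
  have hcover : Icc A (B - δ) ⊆ E ∪ (· + δ) ⁻¹' E := by
    intro r ⟨hAr, hrB⟩
    rcases le_total (cos (ω * r)) 0 with hc | hc
    · exact Or.inl ⟨⟨hAr, by linarith⟩, hc⟩
    · have hshift : cos (ω * (r + δ)) = -cos (ω * r) := by
        rw [mul_add, mul_div_cancel₀ _ hω.ne', cos_add_pi]
      exact Or.inr ⟨⟨by linarith, by linarith⟩, by linarith⟩
  have hvol : ENNReal.ofReal (B - A - δ) ≤ volume E * 2 :=
    calc ENNReal.ofReal (B - A - δ) = volume (Icc A (B - δ)) := by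
          rw [volume_Icc, sub_right_comm]
      _ ≤ volume E + volume ((· + δ) ⁻¹' E) :=
          (measure_mono hcover).trans (measure_union_le _ _)
      _ = volume E * 2 := by rw [measure_preimage_add_right, mul_two]
  rw [ENNReal.ofReal_div_of_pos two_pos, ENNReal.ofReal_ofNat]
  exact ENNReal.div_le_of_le_mul hvol

theorem volume_real_shell_cos_nonpos_ge {a s : ℝ} (hs : 0 < s) (has : 4 * π ≤ a * s) :
    (8 * s)⁻¹ ≤ volume.real {r ∈ Icc (2 * s)⁻¹ s⁻¹ | cos (a * s ^ 2 * r) ≤ 0} := by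
  have ha : 0 < a := pos_of_mul_pos_left ((by positivity : 0 < 4 * π).trans_le has) hs.le
  have hfin : volume {r ∈ Icc (2 * s)⁻¹ s⁻¹ | cos (a * s ^ 2 * r) ≤ 0} ≠ ⊤ :=
    ((measure_mono fun _ hr => hr.1).trans_lt measure_Icc_lt_top).ne
  have hperiod : π / (a * s ^ 2) ≤ (4 * s)⁻¹ := by
    rw [div_le_iff₀ (by positivity), show (4 * s)⁻¹ * (a * s ^ 2) = a * s / 4 by field_simp]
    linarith
  have hlen : (8 * s)⁻¹ ≤ (s⁻¹ - (2 * s)⁻¹ - π / (a * s ^ 2)) / 2 := by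
    have h2 : s⁻¹ = 2 * (2 * s)⁻¹ := by field_simp
    have h4 : (2 * s)⁻¹ = 2 * (4 * s)⁻¹ := by field_simp; ring
    have h8 : (4 * s)⁻¹ = 2 * (8 * s)⁻¹ := by field_simp; ring
    linarith
  exact (ENNReal.ofReal_le_iff_le_toReal hfin).1
    ((ENNReal.ofReal_le_ofReal hlen).trans (volume_Icc_cos_nonpos_ge _ _ _ (by positivity)))

theorem setIntegral_closedBall_fun_norm {E : Type*} [NormedAddCommGroup E] [NormedSpace ℝ E]
    [Nontrivial E] [FiniteDimensional ℝ E] [MeasurableSpace E] [BorelSpace E] (μ : Measure E)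
    [μ.IsAddHaarMeasure] (f : ℝ → ℝ) (R : ℝ) :
    ∫ x in closedBall (0 : E) R, f ‖x‖ ∂μ =
      Module.finrank ℝ E * μ.real (ball 0 1) *
        ∫ y in Ioc 0 R, y ^ (Module.finrank ℝ E - 1) * f y := by
  have hind : (closedBall (0 : E) R).indicator (fun x => f ‖x‖) =
      fun x => (Iic R).indicator f ‖x‖ := by
    ext x
    simp only [indicator, mem_closedBall_zero_iff, mem_Iic]
  rw [← integral_indicator measurableSet_closedBall, hind, integral_fun_norm_addHaar,
    nsmul_eq_mul, smul_eq_mul, mul_assoc, ← Ioi_inter_Iic,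
    ← setIntegral_indicator measurableSet_Iic]
  simp only [smul_eq_mul, indicator_mul_right]

theorem rpow_neg_three_halves_sub_natCast {s : ℝ} (hs : 0 < s) (k : ℕ) :
    (s ^ 2) ^ (-(3 : ℝ) / 2 - k) = s⁻¹ ^ (2 * k + 3) := by
  rw [← rpow_natCast_mul hs.le, show ((2 : ℕ) : ℝ) * (-(3 : ℝ) / 2 - k) = -((2 * k + 3 : ℕ) : ℝ)
    by push_cast; ring, rpow_neg hs.le, rpow_natCast, inv_pow]

noncomputable def radialProfile (η β a t : ℝ) (k : ℕ) (r : ℝ) : ℝ :=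
  r ^ (2 * k) * |exp (-η * r ^ 2 * t) * cos (a * r * t) - exp (-β * r ^ 2 * t)| ^ 2

theorem continuous_radialProfile (η β a t : ℝ) (k : ℕ) :
    Continuous (radialProfile η β a t k) := by
  unfold radialProfile
  fun_prop

theorem radialProfile_nonneg (η β a t : ℝ) (k : ℕ) (r : ℝ) : 0 ≤ radialProfile η β a t k r :=
  mul_nonneg ((even_two_mul k).pow_nonneg r) (sq_nonneg _)

theorem radialProfile_ge_of_cos_nonpos {η β a s r : ℝ} (k : ℕ) (hβ : 0 ≤ β) (hs : 0 < s)
    (hr : r ∈ Icc (2 * s)⁻¹ s⁻¹) (hcos : cos (a * s ^ 2 * r) ≤ 0) :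
    exp (-β) ^ 2 * (2 * s)⁻¹ ^ (2 * k + 2) ≤ r ^ 2 * radialProfile η β a (s ^ 2) k r := by
  have hr0 : 0 < r := (inv_pos.2 (by positivity)).trans_le hr.1
  have hrs : r ^ 2 * s ^ 2 ≤ 1 := by
    rw [← mul_pow]
    refine pow_le_one₀ (by positivity) ?_
    simpa [hs.ne'] using mul_le_mul_of_nonneg_right hr.2 hs.le
  have hexp : exp (-β) ≤ exp (-β * r ^ 2 * s ^ 2) :=
    exp_le_exp.2 (by nlinarith)
  have habs : exp (-β * r ^ 2 * s ^ 2) ≤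
      |exp (-η * r ^ 2 * s ^ 2) * cos (a * r * s ^ 2) - exp (-β * r ^ 2 * s ^ 2)| := by
    rw [mul_right_comm] at hcos
    refine le_abs.2 (Or.inr ?_)
    nlinarith [mul_nonpos_of_nonneg_of_nonpos (exp_pos (-η * r ^ 2 * s ^ 2)).le hcos]
  rw [radialProfile, ← mul_assoc, ← pow_add, add_comm, mul_comm (exp (-β) ^ 2)]
  exact mul_le_mul (pow_le_pow_left₀ (by positivity) hr.1 _)
    (pow_le_pow_left₀ (exp_pos _).le (hexp.trans habs) 2) (by positivity) (by positivity)

theorem integral_Ioc_radialProfile_ge {η β a s r₀ : ℝ} (k : ℕ) (hβ : 0 ≤ β) (hs : 0 < s)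
    (hsr : s⁻¹ ≤ r₀) (has : 4 * π ≤ a * s) :
    exp (-β) ^ 2 * (2 * s)⁻¹ ^ (2 * k + 2) * (8 * s)⁻¹ ≤
      ∫ r in Ioc 0 r₀, r ^ 2 * radialProfile η β a (s ^ 2) k r := by
  set S := {r ∈ Icc (2 * s)⁻¹ s⁻¹ | cos (a * s ^ 2 * r) ≤ 0}
  have hS : S ⊆ Ioc 0 r₀ := fun r hr =>
    ⟨(inv_pos.2 (by positivity)).trans_le hr.1.1, hr.1.2.trans hsr⟩
  have hSmeas : MeasurableSet S := measurableSet_Icc.inter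
    (measurableSet_le (by fun_prop : Measurable fun r : ℝ => cos (a * s ^ 2 * r)) measurable_const)
  have hint : IntegrableOn (fun r => r ^ 2 * radialProfile η β a (s ^ 2) k r) (Ioc 0 r₀) :=
    (((continuous_pow 2).mul (continuous_radialProfile η β a _ k)).integrableOn_Icc).mono_set
      Ioc_subset_Icc_self
  calc _ ≤ exp (-β) ^ 2 * (2 * s)⁻¹ ^ (2 * k + 2) * volume.real S :=
        mul_le_mul_of_nonneg_left (volume_real_shell_cos_nonpos_ge hs has) (by positivity)
    _ ≤ _ := setIntegral_ge_of_const_le_real hSmeas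
        ((measure_mono hS).trans_lt measure_Ioc_lt_top).ne
        (fun r hr => radialProfile_ge_of_cos_nonpos k hβ hs hr.1 hr.2) (hint.mono_set hS)
    _ ≤ _ := setIntegral_mono_set hint
        (ae_of_all _ fun r => mul_nonneg (sq_nonneg r) (radialProfile_nonneg η β a _ k r))
        hS.eventuallyLE

theorem cos_difference_lower_bound_general (η β r₀ : ℝ) (hβ : 0 < β)
    (hr₀ : 0 < r₀) (k : ℕ) :
    ∃ c > 0, ∃ T > 0, ∀ t : ℝ, T ≤ t →
      c * (1 + t) ^ (-(3 : ℝ) / 2 - (k : ℝ)) ≤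
        ∫ ξ in Metric.closedBall (0 : EuclideanSpace ℝ (Fin 3)) r₀,
          ‖ξ‖ ^ (2 * k) *
            |Real.exp (-η * ‖ξ‖ ^ 2 * t) * Real.cos (2 * Real.sqrt (2 / 3) * ‖ξ‖ * t)
              - Real.exp (-β * ‖ξ‖ ^ 2 * t)| ^ 2 := by
  set a := 2 * √(2 / 3)
  have ha : 0 < a := by positivity
  set κ := volume.real (ball (0 : EuclideanSpace ℝ (Fin 3)) 1)
  have hκ : 0 < κ :=
    ENNReal.toReal_pos (measure_ball_pos volume _ one_pos).ne' measure_ball_lt_top.ne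
  set S := max r₀⁻¹ (4 * π / a)
  have hS : 0 < S := (inv_pos.2 hr₀).trans_le (le_max_left _ _)
  refine ⟨3 * κ * exp (-β) ^ 2 / 2 ^ (2 * k + 5), by positivity, S ^ 2, by positivity,
    fun t ht => ?_⟩
  obtain ⟨s, hSs, rfl⟩ : ∃ s, S ≤ s ∧ s ^ 2 = t :=
    ⟨√t, le_sqrt_of_sq_le ht, sq_sqrt ((sq_nonneg S).trans ht)⟩
  have hs : 0 < s := hS.trans_le hSs
  have hsr : s⁻¹ ≤ r₀ := inv_le_of_inv_le₀ hr₀ ((le_max_left _ _).trans hSs)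
  have has : 4 * π ≤ a * s := by
    rw [← div_le_iff₀' ha]
    exact (le_max_right _ _).trans hSs
  refine le_of_le_of_eq ?_
    (setIntegral_closedBall_fun_norm volume (radialProfile η β a (s ^ 2) k) r₀).symm
  rw [finrank_euclideanSpace_fin]
  calc _ ≤ 3 * κ * exp (-β) ^ 2 / 2 ^ (2 * k + 5) * (s ^ 2) ^ (-(3 : ℝ) / 2 - (k : ℝ)) :=
        mul_le_mul_of_nonneg_left (rpow_le_rpow_of_nonpos (by positivity) (by linarith)
          (by linarith [k.cast_nonneg (α := ℝ)])) (by positivity)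
    _ = 3 * κ * (exp (-β) ^ 2 * (2 * s)⁻¹ ^ (2 * k + 2) * (8 * s)⁻¹) := by
        rw [rpow_neg_three_halves_sub_natCast hs]
        simp only [inv_pow]
        field_simp
        ring
    _ ≤ _ := by
        push_cast
        gcongr
        exact integral_Ioc_radialProfile_ge k hβ.le hs hsr has

/-- Lower bound (3.95): for η, β, r₀ > 0 and k ∈ ℕ there are c > 0 and T > 0 such that
    for all t ≥ T,
    ∫_{|ξ|≤r₀} |ξ|^{2k} |e^{-η|ξ|²t} cos(2√(2/3)|ξ|t) - e^{-β|ξ|²t}|² dξ ≥ c (1+t)^{-3/2-k}. -/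
theorem cos_difference_lower_bound (η β r₀ : ℝ) (hη : 0 < η) (hβ : 0 < β)
    (hr₀ : 0 < r₀) (k : ℕ) :
    ∃ c > 0, ∃ T > 0, ∀ t : ℝ, T ≤ t →
      c * (1 + t) ^ (-(3 : ℝ) / 2 - (k : ℝ)) ≤
        ∫ ξ in Metric.closedBall (0 : EuclideanSpace ℝ (Fin 3)) r₀,
          ‖ξ‖ ^ (2 * k) *
            |Real.exp (-η * ‖ξ‖ ^ 2 * t) * Real.cos (2 * Real.sqrt (2 / 3) * ‖ξ‖ * t)
              - Real.exp (-β * ‖ξ‖ ^ 2 * t)| ^ 2 :=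
  cos_difference_lower_bound_general η β r₀ hβ hr₀ k
end

section
/- There exists a constant c > 0 such that for all sufficiently large t > 0, ∫_{|ξ| ≤ r₀} |ξ|^{2k} e^{-2η|ξ|² t} sin²(2√(2/3)|ξ| t) dξ ≥ c (1+t)^{-3/2-k}, for any fixed η > 0, r₀ > 0 and nonnegative integer k. -/
/-!
In polar coordinates the integral is `3 vol(B₁) ∫₀^r₀ y^(2k+2) e^(-2ηy²t) sin²(ay) dy` with
`a = 2√(2/3) t`. On the shell `1/√t < y ≤ 2/√t` the Gaussian factor is at least `e^(-8η)` and the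
power at least `t^(-k-1)`, while `a ≥ 4√t` makes `sin²(ay)` oscillate fast enough that its integral
over the shell is at least a quarter of the shell width `1/√t`. This gives `t^(-k-3/2)`.
-/

open MeasureTheory Set Metric Real

theorem setIntegral_closedBall_fun_norm_addHaar {E F : Type*} [NormedAddCommGroup E]
    [NormedSpace ℝ E] [MeasurableSpace E] [Nontrivial E] [FiniteDimensional ℝ E] [BorelSpace E]
    [NormedAddCommGroup F] [NormedSpace ℝ F] (μ : Measure E) [μ.IsAddHaarMeasure]
    (f : ℝ → F) (r : ℝ) :
    ∫ x in closedBall 0 r, f ‖x‖ ∂μ = Module.finrank ℝ E • μ.real (ball 0 1) •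
      ∫ y in Ioc 0 r, y ^ (Module.finrank ℝ E - 1) • f y := by
  have hball : closedBall (0 : E) r = (‖·‖) ⁻¹' Iic r := by ext; simp
  have hind : (closedBall (0 : E) r).indicator (fun x => f ‖x‖) =
      fun x => (Iic r).indicator f ‖x‖ :=
    funext fun x => hball ▸ indicator_comp_right (f := (‖·‖)) (g := f) (x := x)
  rw [← integral_indicator measurableSet_closedBall, hind, integral_fun_norm_addHaar μ,
    ← Ioi_inter_Iic, ← setIntegral_indicator measurableSet_Iic]
  simp_rw [indicator_smul_apply]

theorem setIntegral_closedBall_euclideanSpace_fin_three (g : ℝ → ℝ) (r : ℝ) :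
    ∫ ξ in closedBall (0 : EuclideanSpace ℝ (Fin 3)) r, g ‖ξ‖ =
      3 * volume.real (ball (0 : EuclideanSpace ℝ (Fin 3)) 1) * ∫ y in Ioc 0 r, y ^ 2 * g y := by
  rw [setIntegral_closedBall_fun_norm_addHaar, finrank_euclideanSpace_fin, nsmul_eq_mul,
    smul_eq_mul, ← mul_assoc]
  rfl

theorem integral_sin_sq_mul_ge {a : ℝ} (ha : 0 < a) (u v : ℝ) :
    (v - u) / 2 - 1 / a ≤ ∫ y in u..v, sin (a * y) ^ 2 := by
  have hsc : ∀ x, |sin x * cos x| ≤ 1 := fun x => by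
    rw [abs_mul]; exact mul_le_one₀ (abs_sin_le_one x) (abs_nonneg _) (abs_cos_le_one x)
  have hu := abs_le.mp (hsc (a * u))
  have hv := abs_le.mp (hsc (a * v))
  have hlhs : (v - u) / 2 - 1 / a = a⁻¹ * ((a * v - a * u) / 2 - 1) := by field_simp
  rw [intervalIntegral.integral_comp_mul_left (fun x => sin x ^ 2) ha.ne', integral_sin_sq,
    smul_eq_mul, hlhs]
  gcongr
  linarith

theorem pow_mul_exp_ge_of_mem_Ioc {η t y : ℝ} (hη : 0 ≤ η) (ht : 0 < t) (n : ℕ)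
    (hy : y ∈ Ioc (1 / √t) (2 / √t)) :
    exp (-8 * η) / √t ^ n ≤ y ^ n * exp (-2 * η * y ^ 2 * t) := by
  have hs : 0 < √t := sqrt_pos.mpr ht
  have hyt : y ^ 2 * t ≤ 4 := by
    have h2 : y * √t ≤ 2 := (le_div_iff₀ hs).mp hy.2
    have h0 : 0 ≤ y * √t := mul_nonneg ((div_pos one_pos hs).le.trans hy.1.le) hs.le
    calc y ^ 2 * t = (y * √t) ^ 2 := by rw [mul_pow, sq_sqrt ht.le]
      _ ≤ 2 ^ 2 := by gcongr
      _ = 4 := by norm_num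
  rw [div_eq_mul_inv, mul_comm, ← inv_pow, ← one_div]
  have hy0 : 0 ≤ 1 / √t := by positivity
  exact mul_le_mul (pow_le_pow_left₀ hy0 hy.1.le n) (exp_le_exp.mpr (by nlinarith))
    (exp_pos _).le (pow_nonneg (hy0.trans hy.1.le) n)

theorem integral_pow_mul_exp_mul_sin_sq_ge {η t r a : ℝ} (hη : 0 ≤ η) (ht : 0 < t)
    (hr : 2 / √t ≤ r) (ha : 4 * √t ≤ a) (n : ℕ) :
    exp (-8 * η) / (4 * √t ^ (n + 1)) ≤
      ∫ y in Ioc 0 r, y ^ n * exp (-2 * η * y ^ 2 * t) * sin (a * y) ^ 2 := by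
  have hs : 0 < √t := sqrt_pos.mpr ht
  have ha0 : 0 < a := by linarith
  have huv : 1 / √t ≤ 2 / √t := by gcongr; norm_num
  have hgap : 1 / (4 * √t) ≤ 1 / (2 * √t) - 1 / a := by
    have : 1 / a ≤ 1 / (4 * √t) := one_div_le_one_div_of_le (by positivity) ha
    have : 1 / (2 * √t) = 2 * (1 / (4 * √t)) := by field_simp; norm_num
    linarith
  have hcont : Continuous fun y => y ^ n * exp (-2 * η * y ^ 2 * t) * sin (a * y) ^ 2 := by
    fun_prop
  calc exp (-8 * η) / (4 * √t ^ (n + 1))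
      = exp (-8 * η) / √t ^ n * (1 / (4 * √t)) := by field_simp; ring
    _ ≤ exp (-8 * η) / √t ^ n * (1 / (2 * √t) - 1 / a) := by gcongr
    _ ≤ exp (-8 * η) / √t ^ n * ∫ y in (1 / √t)..(2 / √t), sin (a * y) ^ 2 := by
        gcongr
        have h := integral_sin_sq_mul_ge ha0 (1 / √t) (2 / √t)
        rwa [show (2 / √t - 1 / √t) / 2 = 1 / (2 * √t) by ring] at h
    _ = ∫ y in Ioc (1 / √t) (2 / √t), exp (-8 * η) / √t ^ n * sin (a * y) ^ 2 := by
        rw [intervalIntegral.integral_of_le huv, integral_const_mul]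
    _ ≤ ∫ y in Ioc (1 / √t) (2 / √t), y ^ n * exp (-2 * η * y ^ 2 * t) * sin (a * y) ^ 2 := by
        refine setIntegral_mono_on (by fun_prop : Continuous _).integrableOn_Ioc
          hcont.integrableOn_Ioc measurableSet_Ioc fun y hy => ?_
        gcongr
        exact pow_mul_exp_ge_of_mem_Ioc hη ht n hy
    _ ≤ ∫ y in Ioc 0 r, y ^ n * exp (-2 * η * y ^ 2 * t) * sin (a * y) ^ 2 := by
        refine setIntegral_mono_set hcont.integrableOn_Ioc ?_
          (Ioc_subset_Ioc (by positivity) hr).eventuallyLE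
        filter_upwards [ae_restrict_mem measurableSet_Ioc] with y hy
        have := hy.1.le
        positivity

theorem one_add_rpow_le_inv_sqrt_pow {t : ℝ} (ht : 0 < t) (k : ℕ) :
    (1 + t) ^ (-(3 : ℝ) / 2 - k) ≤ (√t ^ (2 * k + 3))⁻¹ := by
  calc (1 + t) ^ (-(3 : ℝ) / 2 - k) ≤ t ^ (-(3 : ℝ) / 2 - k) :=
        rpow_le_rpow_of_nonpos ht (by linarith) (by linarith [k.cast_nonneg (α := ℝ)])
    _ = (√t ^ (2 * k + 3))⁻¹ := by
        rw [sqrt_eq_rpow, ← rpow_natCast, ← rpow_mul ht.le, ← rpow_neg ht.le]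
        push_cast
        ring_nf

/-- Lower bound (3.100): for η, r₀ > 0 and k ∈ ℕ there are c > 0 and T > 0 such that
    for all t ≥ T,
    ∫_{|ξ|≤r₀} |ξ|^{2k} e^{-2η|ξ|²t} sin²(2√(2/3)|ξ|t) dξ ≥ c (1+t)^{-3/2-k}. -/
theorem sin_squared_lower_bound (η r₀ : ℝ) (hη : 0 < η) (hr₀ : 0 < r₀) (k : ℕ) :
    ∃ c > 0, ∃ T > 0, ∀ t : ℝ, T ≤ t →
      c * (1 + t) ^ (-(3 : ℝ) / 2 - (k : ℝ)) ≤
        ∫ ξ in Metric.closedBall (0 : EuclideanSpace ℝ (Fin 3)) r₀,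
          ‖ξ‖ ^ (2 * k) * Real.exp (-2 * η * ‖ξ‖ ^ 2 * t) *
            Real.sin (2 * Real.sqrt (2 / 3) * ‖ξ‖ * t) ^ 2 := by
  set V := volume.real (ball (0 : EuclideanSpace ℝ (Fin 3)) 1)
  have hV : 0 < V := ENNReal.toReal_pos (measure_ball_pos volume 0 one_pos).ne'
    measure_ball_lt_top.ne
  refine ⟨3 * V * exp (-8 * η) / 4, by positivity, max 16 ((2 / r₀) ^ 2), by positivity,
    fun t ht => ?_⟩
  have ht16 : 16 ≤ t := le_of_max_le_left ht
  have ht0 : 0 < t := by linarith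
  have hs4 : 4 ≤ √t := (le_sqrt (by norm_num) ht0.le).mpr (by linarith)
  have hr : 2 / √t ≤ r₀ := (div_le_comm₀ (by positivity) hr₀).mpr
    ((le_sqrt (by positivity) ht0.le).mpr (le_of_max_le_right ht))
  have ha : 4 * √t ≤ 2 * √(2 / 3) * t := by
    have : 1 / 2 ≤ √(2 / 3) := (le_sqrt (by norm_num) (by norm_num)).mpr (by norm_num)
    nlinarith [mul_self_sqrt ht0.le]
  calc 3 * V * exp (-8 * η) / 4 * (1 + t) ^ (-(3 : ℝ) / 2 - k)
      ≤ 3 * V * exp (-8 * η) / 4 * (√t ^ (2 * k + 3))⁻¹ := by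
        gcongr
        exact one_add_rpow_le_inv_sqrt_pow ht0 k
    _ = 3 * V * (exp (-8 * η) / (4 * √t ^ (2 * k + 2 + 1))) := by field_simp
    _ ≤ _ := by
        rw [setIntegral_closedBall_euclideanSpace_fin_three
          (fun y => y ^ (2 * k) * exp (-2 * η * y ^ 2 * t) * sin (2 * √(2 / 3) * y * t) ^ 2)]
        gcongr
        refine (integral_pow_mul_exp_mul_sin_sq_ge hη.le ht0 hr ha _).trans_eq
          (setIntegral_congr_fun measurableSet_Ioc fun y _ => ?_)
        ring_nf
end

section
/- Let Q be a maximal dissipative operator on a Hilbert space H satisfying Re(Qf, f) ≤ -μ‖f‖² for all f ∈ D(Q), with μ > 0. Then for every x > -μ and f ∈ H, ∫_{-∞}^{∞} ‖((x + iy) - Q)^{-1} f‖² dy ≤ π (x + μ)^{-1} ‖f‖². -/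
/-!
Put `u = R z f`. Since `z • u - Q u = f`, dissipativity gives `(Re z + μ) ‖u‖² ≤ Re ⟪f, u⟫`, so it
suffices to show `∫ Re ⟪f, R (x + y i) f⟫ dy = π ‖f‖²`. Expanding the resolvent twice around
`c = x - 1` gives `⟪f, R z f⟫ = ‖f‖² / (z - c) + O(|z - c|⁻²)` uniformly on `Re z ≥ x`. The error
term is holomorphic there, so by Cauchy's theorem on the rectangles `[x, x + T] × [-T, T]` its
integral along the line `Re z = x` vanishes, while `Re (1 / (1 + y i)) = 1 / (1 + y²)` integrates
to `π`.
-/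

open MeasureTheory Complex Set Filter Topology
open scoped Interval

section VerticalLine

variable {E : Type*} [NormedAddCommGroup E] {φ : ℂ → E} {x M : ℝ}

lemma norm_le_div_sq_of_le_norm_sub
    (hbound : ∀ z : ℂ, x ≤ z.re → ‖φ z‖ ≤ M / ‖z - (x - 1)‖ ^ 2)
    {z : ℂ} (hz : x ≤ z.re) {r : ℝ} (hr : 0 < r) (hrz : r ≤ ‖z - (x - 1)‖) :
    ‖φ z‖ ≤ M / r ^ 2 := by
  have hM : 0 ≤ M := by simpa using (norm_nonneg _).trans (hbound x (by simp))
  exact (hbound z hz).trans (by gcongr)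

variable [NormedSpace ℂ E]

lemma integrable_vertical_of_decay (hφ : DifferentiableOn ℂ φ {z | x ≤ z.re})
    (hbound : ∀ z : ℂ, x ≤ z.re → ‖φ z‖ ≤ M / ‖z - (x - 1)‖ ^ 2) :
    Integrable (fun y : ℝ => φ (x + y * I)) := by
  refine (integrable_inv_one_add_sq.const_mul M).mono' ?_ (.of_forall fun y => ?_)
  · exact (hφ.continuousOn.comp_continuous (by fun_prop) fun y => by simp).aestronglyMeasurable
  · have hnorm : ‖(x + y * I : ℂ) - (x - 1)‖ ^ 2 = 1 + y ^ 2 := by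
      rw [show (x + y * I : ℂ) - (x - 1) = (1 : ℝ) + y * I by push_cast; ring,
        Complex.sq_norm, Complex.normSq_add_mul_I, one_pow]
    simpa only [hnorm, div_eq_mul_inv] using hbound (x + y * I) (by simp)

lemma norm_intervalIntegral_vertical_le (hφ : DifferentiableOn ℂ φ {z | x ≤ z.re})
    (hbound : ∀ z : ℂ, x ≤ z.re → ‖φ z‖ ≤ M / ‖z - (x - 1)‖ ^ 2) {T : ℝ} (hT : 0 < T) :
    ‖∫ y in -T..T, φ (x + y * I)‖ ≤ 4 * M / T := by
  have hrect := integral_boundary_rect_eq_zero_of_differentiableOn φ ⟨x, -T⟩ ⟨x + T, T⟩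
    (hφ.mono fun z hz => by
      simp only [mem_reProdIm, uIcc_of_le (le_add_of_nonneg_right hT.le)] at hz
      exact hz.1.1)
  dsimp only at hrect
  have hside : ∀ s ∈ Ι x (x + T), ∀ t : ℝ, |t| = T → ‖φ (s + t * I)‖ ≤ M / T ^ 2 := by
    intro s hs t ht
    rw [uIoc_of_le (le_add_of_nonneg_right hT.le)] at hs
    refine norm_le_div_sq_of_le_norm_sub hbound (by simpa using hs.1.le) hT ?_
    simpa [ht] using abs_im_le_norm ((s + t * I : ℂ) - (x - 1))
  have hright : ∀ y ∈ Ι (-T) T, ‖φ ((x + T : ℝ) + y * I)‖ ≤ M / T ^ 2 := by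
    intro y _
    refine norm_le_div_sq_of_le_norm_sub hbound (by simp [hT.le]) hT ?_
    refine le_trans ?_ (re_le_norm _)
    simp
  have hbottom := intervalIntegral.norm_integral_le_of_norm_le_const
    fun s hs => hside s hs (-T) (by simp [hT.le])
  have htop := intervalIntegral.norm_integral_le_of_norm_le_const
    fun s hs => hside s hs T (abs_of_pos hT)
  have hrt := intervalIntegral.norm_integral_le_of_norm_le_const hright
  have hleft : I • ∫ y in -T..T, φ (x + y * I) = (∫ s in x..x + T, φ (s + (-T : ℝ) * I))
      - (∫ s in x..x + T, φ (s + T * I)) + I • ∫ y in -T..T, φ ((x + T : ℝ) + y * I) := by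
    rwa [sub_eq_zero, eq_comm] at hrect
  calc ‖∫ y in -T..T, φ (x + y * I)‖ = ‖I • ∫ y in -T..T, φ (x + y * I)‖ := by simp [norm_smul]
    _ ≤ M / T ^ 2 * |x + T - x| + M / T ^ 2 * |x + T - x| + M / T ^ 2 * |T - -T| := by
      rw [hleft]
      refine (norm_add_le _ _).trans
        (add_le_add ((norm_sub_le _ _).trans (add_le_add hbottom htop)) ?_)
      simpa [norm_smul] using hrt
    _ = 4 * M / T := by
      rw [add_sub_cancel_left, sub_neg_eq_add, abs_of_pos hT, abs_of_pos (by linarith)]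
      field_simp
      ring

theorem integral_vertical_eq_zero_of_decay (hφ : DifferentiableOn ℂ φ {z | x ≤ z.re})
    (hbound : ∀ z : ℂ, x ≤ z.re → ‖φ z‖ ≤ M / ‖z - (x - 1)‖ ^ 2) :
    ∫ y : ℝ, φ (x + y * I) = 0 := by
  have hlim : Tendsto (fun T : ℝ => ∫ y in -T..T, φ (x + y * I)) atTop
      (𝓝 (∫ y : ℝ, φ (x + y * I))) :=
    intervalIntegral_tendsto_integral (integrable_vertical_of_decay hφ hbound)
      tendsto_neg_atTop_atBot tendsto_id
  refine tendsto_nhds_unique hlim (squeeze_zero_norm' ?_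
    ((tendsto_const_nhds (x := 4 * M)).div_atTop tendsto_id))
  filter_upwards [eventually_gt_atTop 0] with T hT
  exact norm_intervalIntegral_vertical_le hφ hbound hT

end VerticalLine

lemma re_inv_one_add_mul_I (y : ℝ) : ((1 + y * I)⁻¹).re = (1 + y ^ 2)⁻¹ := by
  rw [inv_re, ← ofReal_one, normSq_add_mul_I]
  simp

section Resolvent

variable {H : Type*} [NormedAddCommGroup H] [NormedSpace ℂ H]

def IsResolventAt (Q S : H →L[ℂ] H) (lam : ℂ) : Prop :=
  (∀ f : H, S (lam • f - Q f) = f) ∧ ∀ f : H, lam • S f - Q (S f) = f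

namespace IsResolventAt

variable {Q S : H →L[ℂ] H} {lam : ℂ}

def unit (h : IsResolventAt Q S lam) : (H →L[ℂ] H)ˣ where
  val := algebraMap ℂ (H →L[ℂ] H) lam - Q
  inv := S
  val_inv := by ext f; simpa using h.2 f
  inv_val := by ext f; simpa using h.1 f

lemma mem_resolventSet (h : IsResolventAt Q S lam) : lam ∈ resolventSet ℂ Q :=
  spectrum.mem_resolventSet_iff.mpr h.unit.isUnit

lemma resolvent_eq (h : IsResolventAt Q S lam) : resolvent Q lam = S :=
  Ring.inverse_unit h.unit

lemma smul_apply_eq (h : IsResolventAt Q S lam) (c : ℂ) (g : H) :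
    (lam - c) • S g = g + S ((Q - c • 1) g) := by
  have hleft := h.1 g
  rw [map_sub, map_smul] at hleft
  simp only [sub_apply, smul_apply, one_apply_eq_self, map_sub, map_smul]
  linear_combination (norm := module) hleft

lemma sub_inv_smul_eq (h : IsResolventAt Q S lam) {c : ℂ} (hc : lam ≠ c) (f : H) :
    S f - (lam - c)⁻¹ • f =
      (lam - c)⁻¹ ^ 2 • ((Q - c • 1) f + S ((Q - c • 1) ((Q - c • 1) f))) := by
  have hd : lam - c ≠ 0 := sub_ne_zero.mpr hc
  rw [(eq_inv_smul_iff₀ hd).mpr (h.smul_apply_eq c f),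
    (eq_inv_smul_iff₀ hd).mpr (h.smul_apply_eq c ((Q - c • 1) f))]
  module

end IsResolventAt

lemma differentiableOn_of_isResolventAt [CompleteSpace H] {Q : H →L[ℂ] H}
    {R : ℂ → H →L[ℂ] H} {s : Set ℂ} (hR : ∀ z ∈ s, IsResolventAt Q (R z) z) :
    DifferentiableOn ℂ R s := fun z hz =>
  (spectrum.hasDerivAt_resolvent_const_left (hR z hz).mem_resolventSet).differentiableAt
    |>.differentiableWithinAt.congr (fun w hw => (hR w hw).resolvent_eq.symm)
      (hR z hz).resolvent_eq.symm

end Resolvent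

section Dissipative

variable {H : Type*} [NormedAddCommGroup H] [InnerProductSpace ℂ H] {μ : ℝ} {Q : H →L[ℂ] H}

lemma mul_norm_sq_le_re_inner_smul_sub
    (hdiss : ∀ f : H, (inner ℂ (Q f) f : ℂ).re ≤ -μ * ‖f‖ ^ 2) (lam : ℂ) (u : H) :
    (lam.re + μ) * ‖u‖ ^ 2 ≤ (inner ℂ (lam • u - Q u) u : ℂ).re := by
  have hre : (inner ℂ (lam • u - Q u) u : ℂ).re = lam.re * ‖u‖ ^ 2 - (inner ℂ (Q u) u : ℂ).re := by
    rw [inner_sub_left, inner_smul_left, inner_self_eq_norm_sq_to_K, sub_re]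
    simp [pow_two]
  linarith [hdiss u]

lemma mul_norm_le_norm_smul_sub
    (hdiss : ∀ f : H, (inner ℂ (Q f) f : ℂ).re ≤ -μ * ‖f‖ ^ 2) (lam : ℂ) (u : H) :
    (lam.re + μ) * ‖u‖ ≤ ‖lam • u - Q u‖ := by
  rcases (norm_nonneg u).eq_or_lt with hu | hu
  · rw [← hu, mul_zero]
    exact norm_nonneg _
  refine le_of_mul_le_mul_right ?_ hu
  calc (lam.re + μ) * ‖u‖ * ‖u‖ = (lam.re + μ) * ‖u‖ ^ 2 := by ring
    _ ≤ (inner ℂ (lam • u - Q u) u : ℂ).re := mul_norm_sq_le_re_inner_smul_sub hdiss lam u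
    _ ≤ ‖lam • u - Q u‖ * ‖u‖ := (re_le_norm _).trans (norm_inner_le_norm _ _)

namespace IsResolventAt

variable {S : H →L[ℂ] H} {lam : ℂ}

lemma mul_norm_sq_apply_le (h : IsResolventAt Q S lam)
    (hdiss : ∀ f : H, (inner ℂ (Q f) f : ℂ).re ≤ -μ * ‖f‖ ^ 2) (f : H) :
    (lam.re + μ) * ‖S f‖ ^ 2 ≤ (inner ℂ f (S f) : ℂ).re := by
  simpa only [h.2 f] using mul_norm_sq_le_re_inner_smul_sub hdiss lam (S f)

lemma norm_apply_le (h : IsResolventAt Q S lam)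
    (hdiss : ∀ f : H, (inner ℂ (Q f) f : ℂ).re ≤ -μ * ‖f‖ ^ 2) {x : ℝ} (hx : 0 < x + μ)
    (hlam : x ≤ lam.re) (g : H) :
    ‖S g‖ ≤ ‖g‖ / (x + μ) := by
  rw [le_div_iff₀ hx, mul_comm]
  calc (x + μ) * ‖S g‖ ≤ (lam.re + μ) * ‖S g‖ := by gcongr
    _ ≤ ‖g‖ := by simpa only [h.2 g] using mul_norm_le_norm_smul_sub hdiss lam (S g)

lemma norm_sub_inv_smul_le (h : IsResolventAt Q S lam)
    (hdiss : ∀ f : H, (inner ℂ (Q f) f : ℂ).re ≤ -μ * ‖f‖ ^ 2) {x : ℝ} (hx : 0 < x + μ)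
    (hlam : x ≤ lam.re) {c : ℂ} (hc : lam ≠ c) (f : H) :
    ‖S f - (lam - c)⁻¹ • f‖ ≤
      (‖(Q - c • 1) f‖ + ‖(Q - c • 1) ((Q - c • 1) f)‖ / (x + μ)) / ‖lam - c‖ ^ 2 := by
  rw [h.sub_inv_smul_eq hc, norm_smul, norm_pow, norm_inv, inv_pow, inv_mul_eq_div]
  gcongr
  exact (norm_add_le _ _).trans (add_le_add_right (h.norm_apply_le hdiss hx hlam _) _)

end IsResolventAt

lemma re_inner_sub_smul_self (f v : H) (w : ℂ) :
    (inner ℂ f (v - w • f)).re = (inner ℂ f v).re - w.re * ‖f‖ ^ 2 := by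
  rw [inner_sub_right, inner_smul_right, inner_self_eq_norm_sq_to_K, sub_re, ← RCLike.ofReal_pow]
  exact congrArg _ (re_mul_ofReal _ _)

lemma differentiableOn_inner_apply_sub_inv_smul [CompleteSpace H]
    {R : ℂ → H →L[ℂ] H} {s : Set ℂ} (hR : ∀ z ∈ s, IsResolventAt Q (R z) z) {c : ℂ}
    (hc : c ∉ s) (f g : H) :
    DifferentiableOn ℂ (fun z => inner ℂ g (R z f - (z - c)⁻¹ • f)) s := by
  have hRf : DifferentiableOn ℂ (fun z => R z f) s :=
    (ContinuousLinearMap.apply ℂ H f).differentiable.comp_differentiableOn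
      (differentiableOn_of_isResolventAt hR)
  have hinv : DifferentiableOn ℂ (fun z : ℂ => (z - c)⁻¹) s := fun z hz =>
    ((differentiableAt_id.sub_const c).inv
      (sub_ne_zero.2 (ne_of_mem_of_not_mem hz hc))).differentiableWithinAt
  exact (innerSL ℂ g).differentiable.comp_differentiableOn (hRf.sub (hinv.smul_const f))

theorem integrable_and_integral_re_inner_resolvent_vertical [CompleteSpace H]
    {R : ℂ → H →L[ℂ] H} (hdiss : ∀ f : H, (inner ℂ (Q f) f : ℂ).re ≤ -μ * ‖f‖ ^ 2)
    (hR : ∀ z : ℂ, -μ < z.re → IsResolventAt Q (R z) z) {x : ℝ} (hx : -μ < x) (f : H) :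
    Integrable (fun y : ℝ => (inner ℂ f (R (x + y * I) f) : ℂ).re) ∧
      ∫ y : ℝ, (inner ℂ f (R (x + y * I) f) : ℂ).re = Real.pi * ‖f‖ ^ 2 := by
  set c : ℂ := x - 1
  set B : H →L[ℂ] H := Q - c • 1
  let φ : ℂ → ℂ := fun z => inner ℂ f (R z f - (z - c)⁻¹ • f)
  have hRz : ∀ z ∈ {z : ℂ | x ≤ z.re}, IsResolventAt Q (R z) z := fun z hz => hR z (hx.trans_le hz)
  have hc : c ∉ {z : ℂ | x ≤ z.re} := by simp [c]
  have hφ : DifferentiableOn ℂ φ {z | x ≤ z.re} :=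
    differentiableOn_inner_apply_sub_inv_smul hRz hc f f
  have hbound : ∀ z : ℂ, x ≤ z.re →
      ‖φ z‖ ≤ ‖f‖ * (‖B f‖ + ‖B (B f)‖ / (x + μ)) / ‖z - (x - 1)‖ ^ 2 := fun z hz => by
    rw [mul_div_assoc]
    exact (norm_inner_le_norm _ _).trans (by
      gcongr
      exact (hRz z hz).norm_sub_inv_smul_le hdiss (by linarith) hz (ne_of_mem_of_not_mem hz hc) f)
  have hline : ∀ y : ℝ, (inner ℂ f (R (x + y * I) f) : ℂ).re =
      ‖f‖ ^ 2 * (1 + y ^ 2)⁻¹ + (φ (x + y * I)).re := fun y => by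
    have hw : (x + y * I : ℂ) - c = 1 + y * I := by push_cast [c]; ring
    simp only [φ, re_inner_sub_smul_self, hw, re_inv_one_add_mul_I]
    ring
  have hφint := integrable_vertical_of_decay hφ hbound
  have hφre : Integrable (fun y : ℝ => (φ (x + y * I)).re) := hφint.re
  have hconst := integrable_inv_one_add_sq.const_mul (‖f‖ ^ 2)
  simp_rw [hline]
  refine ⟨hconst.add hφre, ?_⟩
  have hφzero : ∫ y : ℝ, (φ (x + y * I)).re = 0 := by
    simpa [integral_vertical_eq_zero_of_decay hφ hbound] using integral_re hφint
  rw [integral_add hconst hφre, integral_const_mul, integral_univ_inv_one_add_sq, hφzero,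
    add_zero, mul_comm]

end Dissipative

theorem resolvent_square_integral_bound_general
    {H : Type*} [NormedAddCommGroup H] [InnerProductSpace ℂ H] [CompleteSpace H]
    (μ : ℝ) (Q : H →L[ℂ] H)
    (hdiss : ∀ f : H, (inner ℂ (Q f) f : ℂ).re ≤ -μ * ‖f‖ ^ 2)
    (R : ℂ → H →L[ℂ] H)
    (hR : ∀ lam : ℂ, -μ < lam.re →
      (∀ f : H, R lam (lam • f - Q f) = f) ∧ (∀ f : H, lam • R lam f - Q (R lam f) = f)) :
    ∀ x : ℝ, -μ < x → ∀ f : H,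
      (∫ y : ℝ, ‖R (x + y * Complex.I) f‖ ^ 2) ≤ Real.pi * (x + μ)⁻¹ * ‖f‖ ^ 2 := by
  intro x hx f
  obtain ⟨hint, hval⟩ := integrable_and_integral_re_inner_resolvent_vertical hdiss hR hx f
  have hxμ : 0 < x + μ := by linarith
  have hpoint : ∀ y : ℝ, ‖R (x + y * I) f‖ ^ 2 ≤ (x + μ)⁻¹ * (inner ℂ f (R (x + y * I) f)).re :=
    fun y => by
      rw [le_inv_mul_iff₀ hxμ]
      simpa using IsResolventAt.mul_norm_sq_apply_le (hR (x + y * I) (by simpa using hx)) hdiss f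
  calc ∫ y : ℝ, ‖R (x + y * I) f‖ ^ 2
      ≤ ∫ y : ℝ, (x + μ)⁻¹ * (inner ℂ f (R (x + y * I) f)).re :=
        integral_mono_of_nonneg (.of_forall fun y => by positivity) (hint.const_mul _)
          (.of_forall hpoint)
    _ = Real.pi * (x + μ)⁻¹ * ‖f‖ ^ 2 := by rw [integral_const_mul, hval]; ring

/-- Plancherel-type resolvent bound (3.45): if Q is dissipative with
    Re⟪Qf, f⟫ ≤ -μ‖f‖² and R λ is the resolvent of Q on Re λ > -μ, then for
    every x > -μ and f, ∫_{ℝ} ‖R(x+iy) f‖² dy ≤ π (x+μ)⁻¹ ‖f‖². -/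
theorem resolvent_square_integral_bound
    {H : Type*} [NormedAddCommGroup H] [InnerProductSpace ℂ H] [CompleteSpace H]
    (μ : ℝ) (hμ : 0 < μ) (Q : H →L[ℂ] H)
    (hdiss : ∀ f : H, (inner ℂ (Q f) f : ℂ).re ≤ -μ * ‖f‖ ^ 2)
    (hdiss' : ∀ f : H, (inner ℂ ((ContinuousLinearMap.adjoint Q) f) f : ℂ).re ≤ -μ * ‖f‖ ^ 2)
    (R : ℂ → H →L[ℂ] H)
    (hR : ∀ lam : ℂ, -μ < lam.re →
      (∀ f : H, R lam (lam • f - Q f) = f) ∧ (∀ f : H, lam • R lam f - Q (R lam f) = f)) :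
    ∀ x : ℝ, -μ < x → ∀ f : H,
      (∫ y : ℝ, ‖R (x + y * Complex.I) f‖ ^ 2) ≤ Real.pi * (x + μ)⁻¹ * ‖f‖ ^ 2 :=
  resolvent_square_integral_bound_general μ Q hdiss R hR
end

section
/- Define D₀(x) = ((L₁ - x P_r)^{-1} χ₁, χ₁) for x > -μ, where L₁ is self-adjoint with (L₁f,f) ≤ -μ‖P_r f‖², χ₁ ∈ N₁^⊥ with ‖χ₁‖ = 1, and P_r is the projection onto N₁^⊥. Then D₀ is strictly increasing on (-μ, ∞), D₀(x) < D₀(0) = (L₁^{-1}χ₁, χ₁) < 0 for -μ < x < 0, D₀(x) < 0 for x ≥ 0, and consequently x ≠ D₀(x) for all x > -a₀ where a₀ = min{μ, -(L₁^{-1}χ₁, χ₁)} > 0. -/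
/-!
Write `u = (L - x)⁻¹χ` and `v = (L - y)⁻¹χ` with `-μ < y < x`. Coercivity gives
`Re⟪u, χ⟫ = Re⟪u, (L - x)u⟫ ≤ -(μ + x)‖u‖² < 0`. Symmetry of `L` gives the finite-difference
identity `D(x) - D(y) = (x - y) Re⟪u, v⟫`, and since `(L - y)(u - v) = (x - y)u`, coercivity
applied to `u - v` gives `Re⟪u - v, u⟫ ≤ 0`, i.e. `Re⟪u, v⟫ ≥ ‖u‖² > 0`.
-/

open scoped InnerProductSpace

section Resolvent

variable {𝕜 E : Type*} [RCLike 𝕜] [NormedAddCommGroup E] [InnerProductSpace 𝕜 E]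
  {T : E →ₗ[𝕜] E} {μ x y : ℝ} {u v χ : E}

open RCLike

theorem re_inner_apply_sub_smul_le (hu : re ⟪T u, u⟫_𝕜 ≤ -μ * ‖u‖ ^ 2) (x : ℝ) :
    re ⟪u, T u - (x : 𝕜) • u⟫_𝕜 ≤ -(μ + x) * ‖u‖ ^ 2 := by
  rw [inner_sub_right, map_sub, inner_smul_real_right, RCLike.smul_re, inner_self_eq_norm_sq,
    inner_re_symm]
  linarith

theorem ne_zero_of_apply_sub_smul_eq (hχ : χ ≠ 0) (h : T u - (x : 𝕜) • u = χ) : u ≠ 0 := by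
  rintro rfl
  rw [map_zero, smul_zero, sub_zero] at h
  exact hχ h.symm

theorem re_inner_neg_of_apply_sub_smul_eq (hu : re ⟪T u, u⟫_𝕜 ≤ -μ * ‖u‖ ^ 2) (hx : -μ < x)
    (hχ : χ ≠ 0) (h : T u - (x : 𝕜) • u = χ) : re ⟪u, χ⟫_𝕜 < 0 := by
  have hu₀ := ne_zero_of_apply_sub_smul_eq hχ h
  calc re ⟪u, χ⟫_𝕜 ≤ -(μ + x) * ‖u‖ ^ 2 := h ▸ re_inner_apply_sub_smul_le hu x
    _ < 0 := by
      have : 0 < ‖u‖ ^ 2 := by positivity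
      nlinarith

theorem re_inner_sub_re_inner_of_apply_sub_smul_eq (hT : T.IsSymmetric)
    (hu : T u - (x : 𝕜) • u = χ) (hv : T v - (y : 𝕜) • v = χ) :
    re ⟪u, χ⟫_𝕜 - re ⟪v, χ⟫_𝕜 = (x - y) * re ⟪u, v⟫_𝕜 := by
  have : ⟪u, χ⟫_𝕜 = ⟪χ, v⟫_𝕜 + ((x - y : ℝ) : 𝕜) * ⟪u, v⟫_𝕜 :=
    calc ⟪u, χ⟫_𝕜 = ⟪u, T v - (y : 𝕜) • v⟫_𝕜 := by rw [hv]
      _ = ⟪T u - (x : 𝕜) • u, v⟫_𝕜 + ((x - y : ℝ) : 𝕜) * ⟪u, v⟫_𝕜 := by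
        rw [inner_sub_right, inner_sub_left, ← hT, inner_smul_real_left, inner_smul_real_right]
        simp only [RCLike.real_smul_eq_coe_mul, RCLike.ofReal_sub]
        ring
      _ = ⟪χ, v⟫_𝕜 + ((x - y : ℝ) : 𝕜) * ⟪u, v⟫_𝕜 := by rw [hu]
  rw [this, map_add, RCLike.re_ofReal_mul, inner_re_symm χ]
  ring

theorem re_inner_pos_of_apply_sub_smul_eq (hχ : χ ≠ 0)
    (huv : re ⟪T (u - v), u - v⟫_𝕜 ≤ -μ * ‖u - v‖ ^ 2) (hy : -μ < y) (hyx : y < x)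
    (hu : T u - (x : 𝕜) • u = χ) (hv : T v - (y : 𝕜) • v = χ) :
    0 < re ⟪u, v⟫_𝕜 := by
  have hdiff : T (u - v) - (y : 𝕜) • (u - v) = ((x - y : ℝ) : 𝕜) • u := by
    have : T (u - v) - (y : 𝕜) • (u - v) = (T u - (x : 𝕜) • u) - (T v - (y : 𝕜) • v)
        + ((x - y : ℝ) : 𝕜) • u := by
      rw [map_sub]; push_cast; module
    rw [this, hu, hv, sub_self, zero_add]
  have hle := re_inner_apply_sub_smul_le huv y
  rw [hdiff, inner_smul_real_right, RCLike.smul_re, inner_sub_left, map_sub,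
    inner_self_eq_norm_sq] at hle
  have : 0 < ‖u‖ ^ 2 := by have := ne_zero_of_apply_sub_smul_eq hχ hu; positivity
  have : (x - y) * (‖u‖ ^ 2 - re ⟪v, u⟫_𝕜) ≤ 0 := by nlinarith [sq_nonneg ‖u - v‖]
  rw [inner_re_symm]
  nlinarith

theorem re_inner_lt_re_inner_of_apply_sub_smul_eq (hT : T.IsSymmetric) (hχ : χ ≠ 0)
    (huv : re ⟪T (u - v), u - v⟫_𝕜 ≤ -μ * ‖u - v‖ ^ 2) (hy : -μ < y) (hyx : y < x)
    (hu : T u - (x : 𝕜) • u = χ) (hv : T v - (y : 𝕜) • v = χ) :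
    re ⟪v, χ⟫_𝕜 < re ⟪u, χ⟫_𝕜 := by
  have hdiff := re_inner_sub_re_inner_of_apply_sub_smul_eq hT hu hv
  have hpos := re_inner_pos_of_apply_sub_smul_eq hχ huv hy hyx hu hv
  nlinarith

end Resolvent

theorem ne_self_of_strictMonoOn_of_neg {D : ℝ → ℝ} {μ : ℝ} (hμ : 0 < μ)
    (hmono : StrictMonoOn D (Set.Ioi (-μ))) (hneg : ∀ x, -μ < x → D x < 0) (x : ℝ)
    (hx : -min μ (-D 0) < x) : x ≠ D x := by
  rcases lt_or_ge x 0 with hx₀ | hx₀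
  · have hxμ : -μ < x := by linarith [min_le_left μ (-D 0)]
    have : D x < D 0 := hmono hxμ (by simpa using hμ) hx₀
    linarith [min_le_right μ (-D 0)]
  · linarith [hneg x (by linarith)]

theorem real_dispersion_function_no_fixed_point_general
    {H : Type*} [NormedAddCommGroup H] [InnerProductSpace ℂ H]
    (μ : ℝ) (hμ : 0 < μ)
    (L P : H →L[ℂ] H)
    (hLsa : ∀ f g : H, (inner ℂ (L f) g : ℂ) = inner ℂ f (L g))
    (hcoerc : ∀ f : H, (inner ℂ (L f) f : ℂ).re ≤ -μ * ‖P f‖ ^ 2)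
    (χ₁ : H) (hχP : P χ₁ = χ₁) (hχnorm : ‖χ₁‖ = 1)
    (R : ℝ → H →L[ℂ] H)
    (hR : ∀ x : ℝ, -μ < x → ∀ f : H, P f = f →
      R x (L f - (x : ℂ) • f) = f ∧
      L (R x f) - (x : ℂ) • R x f = f ∧ P (R x f) = R x f)
    (D₀ : ℝ → ℝ) (hD₀ : ∀ x : ℝ, D₀ x = (inner ℂ (R x χ₁) χ₁ : ℂ).re) :
    StrictMonoOn D₀ (Set.Ioi (-μ)) ∧
    (∀ x ∈ Set.Ioo (-μ) (0 : ℝ), D₀ x < D₀ 0) ∧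
    D₀ 0 < 0 ∧
    (∀ x : ℝ, 0 ≤ x → D₀ x < 0) ∧
    (0 < min μ (-(D₀ 0)) ∧ ∀ x : ℝ, -(min μ (-(D₀ 0))) < x → x ≠ D₀ x) := by
  have hL : (L : H →ₗ[ℂ] H).IsSymmetric := hLsa
  have hcoercP (f : H) (hf : P f = f) : (⟪L f, f⟫_ℂ).re ≤ -μ * ‖f‖ ^ 2 := by
    simpa only [hf] using hcoerc f
  have hχ : χ₁ ≠ 0 := norm_ne_zero_iff.mp (by rw [hχnorm]; exact one_ne_zero)
  have hneg (x : ℝ) (hx : -μ < x) : D₀ x < 0 := by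
    obtain ⟨-, hRx, hPRx⟩ := hR x hx χ₁ hχP
    rw [hD₀]
    exact re_inner_neg_of_apply_sub_smul_eq (hcoercP _ hPRx) hx hχ hRx
  have hmono : StrictMonoOn D₀ (Set.Ioi (-μ)) := by
    intro y hy x hx hyx
    obtain ⟨-, hRx, hPRx⟩ := hR x hx χ₁ hχP
    obtain ⟨-, hRy, hPRy⟩ := hR y hy χ₁ hχP
    rw [hD₀, hD₀]
    exact re_inner_lt_re_inner_of_apply_sub_smul_eq hL hχ
      (hcoercP (R x χ₁ - R y χ₁) (by rw [map_sub, hPRx, hPRy])) hy hyx hRx hRy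
  have hμ₀ : (0 : ℝ) ∈ Set.Ioi (-μ) := by simpa using hμ
  refine ⟨hmono, fun x hx => hmono hx.1 hμ₀ hx.2, hneg 0 hμ₀, fun x hx => hneg x (by linarith),
    lt_min hμ (by linarith [hneg 0 hμ₀]), ne_self_of_strictMonoOn_of_neg hμ hmono hneg⟩

/-- Step 1 of Lemma 3.7, abstract form: with D₀(x) = ((L₁ - xP_r)⁻¹χ₁, χ₁), the
    function D₀ is strictly increasing on (-μ,∞), satisfies D₀(x) < D₀(0) < 0 for
    -μ < x < 0 and D₀(x) < 0 for x ≥ 0, and hence x ≠ D₀(x) for all x > -a₀,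
    where a₀ = min{μ, -D₀(0)} > 0. -/
theorem real_dispersion_function_no_fixed_point
    {H : Type*} [NormedAddCommGroup H] [InnerProductSpace ℂ H] [CompleteSpace H]
    (μ : ℝ) (hμ : 0 < μ)
    (L P : H →L[ℂ] H)
    (hLsa : ∀ f g : H, (inner ℂ (L f) g : ℂ) = inner ℂ f (L g))
    (hPsa : ∀ f g : H, (inner ℂ (P f) g : ℂ) = inner ℂ f (P g))
    (hPP : ∀ f : H, P (P f) = P f)
    (hLP : ∀ f : H, L (P f) = P (L f))
    (hcoerc : ∀ f : H, (inner ℂ (L f) f : ℂ).re ≤ -μ * ‖P f‖ ^ 2)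
    (χ₁ : H) (hχP : P χ₁ = χ₁) (hχnorm : ‖χ₁‖ = 1)
    (R : ℝ → H →L[ℂ] H)
    (hR : ∀ x : ℝ, -μ < x → ∀ f : H, P f = f →
      R x (L f - (x : ℂ) • f) = f ∧
      L (R x f) - (x : ℂ) • R x f = f ∧ P (R x f) = R x f)
    (D₀ : ℝ → ℝ) (hD₀ : ∀ x : ℝ, D₀ x = (inner ℂ (R x χ₁) χ₁ : ℂ).re) :
    StrictMonoOn D₀ (Set.Ioi (-μ)) ∧
    (∀ x ∈ Set.Ioo (-μ) (0 : ℝ), D₀ x < D₀ 0) ∧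
    D₀ 0 < 0 ∧
    (∀ x : ℝ, 0 ≤ x → D₀ x < 0) ∧
    (0 < min μ (-(D₀ 0)) ∧ ∀ x : ℝ, -(min μ (-(D₀ 0))) < x → x ≠ D₀ x) :=
  real_dispersion_function_no_fixed_point_general μ hμ L P hLsa hcoerc χ₁ hχP hχnorm R hR D₀ hD₀
end

section
/- With the setting of the previous statement, if λ = x + iy with y ≠ 0 and x > -a₀/2 satisfies λ = ((L₁ - λP_r)^{-1}χ₁, χ₁), then writing h = (L₁ - λP_r)^{-1}χ₁, one gets ‖h‖ = 1 and 2x = (L₁h, h) ≤ -μ, a contradiction; hence λ ≠ D₀(λ) for all λ ∈ ℂ with Re λ > -a₀/2. -/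
/-! Let `h = R λ χ₁`. Pairing `(L - λ) h = χ₁` with `h`, the fixed-point equation reads
`λ = (L h, h) - conj λ ‖h‖²`, where `(L h, h) ≤ -μ ‖h‖²` is real. Its real part forces `Re λ ≤ 0`;
if `Im λ ≠ 0` its imaginary part forces `‖h‖ = 1`, and then `2 Re λ = (L h, h) ≤ -μ ≤ -a₀`.
For real `λ ≤ 0` put `h₀ = R 0 χ₁`: then `L (h - h₀) = λ h`, so `D₀(λ) - D₀(0) = λ (h₀, h)`, and
applying the coercivity of `L` to `h - h₀` shows this is `≤ 0`. Hence `λ = D₀(λ) ≤ D₀(0) ≤ -a₀`. -/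

open ComplexConjugate
open scoped InnerProductSpace

namespace LinearMap.IsSymmetric

variable {H : Type*} [NormedAddCommGroup H] [InnerProductSpace ℂ H] {L : H →ₗ[ℂ] H}

theorem inner_eq_of_sub_smul_eq (hL : L.IsSymmetric) {lam : ℂ} {h χ : H}
    (hh : L h - lam • h = χ) :
    ⟪χ, h⟫_ℂ = ((⟪L h, h⟫_ℂ).re : ℂ) - conj lam * (‖h‖ ^ 2 : ℝ) := by
  rw [← hh, inner_sub_left, inner_smul_left, inner_self_eq_norm_sq_to_K,
    RCLike.ofReal_eq_complex_ofReal, Complex.ofReal_pow]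
  congr 1
  exact (hL.coe_re_inner_apply_self h).symm

theorem re_mul_one_add_norm_sq_of_eq_inner (hL : L.IsSymmetric) {lam : ℂ} {h χ : H}
    (hh : L h - lam • h = χ) (hfix : lam = ⟪χ, h⟫_ℂ) :
    lam.re * (1 + ‖h‖ ^ 2) = (⟪L h, h⟫_ℂ).re := by
  have := congrArg Complex.re (hfix.trans (hL.inner_eq_of_sub_smul_eq hh))
  simp only [Complex.sub_re, Complex.ofReal_re, Complex.re_mul_ofReal, Complex.conj_re] at this
  linarith

theorem norm_eq_one_of_eq_inner (hL : L.IsSymmetric) {lam : ℂ} {h χ : H}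
    (hh : L h - lam • h = χ) (hfix : lam = ⟪χ, h⟫_ℂ) (him : lam.im ≠ 0) : ‖h‖ = 1 := by
  have := congrArg Complex.im (hfix.trans (hL.inner_eq_of_sub_smul_eq hh))
  simp only [Complex.sub_im, Complex.ofReal_im, Complex.im_mul_ofReal, Complex.conj_im] at this
  have hsq : ‖h‖ ^ 2 = 1 ^ 2 := by
    apply mul_left_cancel₀ him
    linarith
  exact (pow_left_inj₀ (norm_nonneg h) zero_le_one two_ne_zero).mp hsq

theorem re_inner_le_of_sub_smul_eq (hL : L.IsSymmetric) {x : ℝ} {h h₀ χ : H}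
    (hh₀ : L h₀ = χ) (hh : L h - (x : ℂ) • h = χ) (hx : x ≤ 0)
    (hdiss : (⟪L (h - h₀), h - h₀⟫_ℂ).re ≤ x * ‖h - h₀‖ ^ 2) :
    (⟪χ, h⟫_ℂ).re ≤ (⟪χ, h₀⟫_ℂ).re := by
  set e := h - h₀
  have hLe : L e = (x : ℂ) • (h₀ + e) := by
    rw [map_sub, hh₀, ← hh]; simp [e]
  have hdiff : ⟪χ, h⟫_ℂ - ⟪χ, h₀⟫_ℂ = x * (‖h₀‖ ^ 2 : ℝ) + x * ⟪h₀, e⟫_ℂ := by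
    rw [← inner_sub_right, ← hh₀, hL, hLe, inner_smul_right, inner_add_right,
      inner_self_eq_norm_sq_to_K, RCLike.ofReal_eq_complex_ofReal]
    push_cast
    ring
  have hsplit : ⟪L e, e⟫_ℂ = x * ⟪h₀, e⟫_ℂ + x * (‖e‖ ^ 2 : ℝ) := by
    rw [hLe, inner_smul_left, Complex.conj_ofReal, inner_add_left, inner_self_eq_norm_sq_to_K,
      RCLike.ofReal_eq_complex_ofReal]
    push_cast
    ring
  have hdiffre := congrArg Complex.re hdiff
  have hsplitre := congrArg Complex.re hsplit
  simp only [Complex.sub_re, Complex.add_re, Complex.re_ofReal_mul, Complex.ofReal_re]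
    at hdiffre hsplitre
  nlinarith [sq_nonneg ‖h₀‖]

end LinearMap.IsSymmetric

theorem complex_dispersion_function_no_fixed_point_general
    {H : Type*} [NormedAddCommGroup H] [InnerProductSpace ℂ H]
    (μ : ℝ)
    (L P : H →L[ℂ] H)
    (hLsa : ∀ f g : H, (inner ℂ (L f) g : ℂ) = inner ℂ f (L g))
    (hcoerc : ∀ f : H, (inner ℂ (L f) f : ℂ).re ≤ -μ * ‖P f‖ ^ 2)
    (χ₁ : H) (hχP : P χ₁ = χ₁)
    (R : ℂ → H →L[ℂ] H)
    (hR : ∀ lam : ℂ, -μ < lam.re → ∀ f : H, P f = f →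
      R lam (L f - lam • f) = f ∧
      L (R lam f) - lam • R lam f = f ∧ P (R lam f) = R lam f)
    (a₀ : ℝ) (ha₀ : a₀ = min μ (-(inner ℂ χ₁ (R 0 χ₁) : ℂ).re)) (ha₀pos : 0 < a₀) :
    ∀ lam : ℂ, -(a₀ / 2) < lam.re → lam ≠ (inner ℂ χ₁ (R lam χ₁) : ℂ) := by
  intro lam hlam hfix
  have hL : (L : H →ₗ[ℂ] H).IsSymmetric := hLsa
  have hμ : a₀ ≤ μ := ha₀ ▸ min_le_left _ _
  have hD₀ : a₀ ≤ -(inner ℂ χ₁ (R 0 χ₁) : ℂ).re := ha₀ ▸ min_le_right _ _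
  obtain ⟨-, hh, hPh⟩ := hR lam (by linarith) χ₁ hχP
  have hcoerc_h := hPh ▸ hcoerc (R lam χ₁)
  have hre := hL.re_mul_one_add_norm_sq_of_eq_inner hh hfix
  rw [ContinuousLinearMap.coe_coe] at hre
  have hre_nonpos : lam.re ≤ 0 := by nlinarith [sq_nonneg ‖R lam χ₁‖]
  by_cases him : lam.im = 0
  · obtain ⟨-, hh₀, hPh₀⟩ := hR 0 (by rw [Complex.zero_re]; linarith) χ₁ hχP
    rw [zero_smul, sub_zero] at hh₀
    have hh' : L (R lam χ₁) - (lam.re : ℂ) • R lam χ₁ = χ₁ := by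
      rwa [show (lam.re : ℂ) = lam from Complex.ext rfl (by simp [him])]
    have hPe : P (R lam χ₁ - R 0 χ₁) = R lam χ₁ - R 0 χ₁ := by rw [map_sub, hPh, hPh₀]
    have hcoerc_e := hPe ▸ hcoerc (R lam χ₁ - R 0 χ₁)
    have hle := hL.re_inner_le_of_sub_smul_eq hh₀ hh' hre_nonpos
      (by rw [ContinuousLinearMap.coe_coe]; nlinarith [sq_nonneg ‖R lam χ₁ - R 0 χ₁‖])
    rw [← hfix] at hle
    linarith
  · have hnorm := hL.norm_eq_one_of_eq_inner hh hfix him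
    rw [hnorm] at hre hcoerc_h
    linarith

/-- Step 2 of Lemma 3.7, abstract form: with D₀(λ) = ((L₁ - λP_r)⁻¹χ₁, χ₁), any
    fixed point λ = D₀(λ) with Im λ ≠ 0 and Re λ > -a₀/2 would force
    ‖h‖ = 1 and 2Re λ = (L₁h, h) ≤ -μ for h = (L₁ - λP_r)⁻¹χ₁, a contradiction;
    hence λ ≠ D₀(λ) for all λ with Re λ > -a₀/2, where a₀ = min{μ, -D₀(0)}. -/
theorem complex_dispersion_function_no_fixed_point
    {H : Type*} [NormedAddCommGroup H] [InnerProductSpace ℂ H] [CompleteSpace H]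
    (μ : ℝ) (hμ : 0 < μ)
    (L P : H →L[ℂ] H)
    (hLsa : ∀ f g : H, (inner ℂ (L f) g : ℂ) = inner ℂ f (L g))
    (hPsa : ∀ f g : H, (inner ℂ (P f) g : ℂ) = inner ℂ f (P g))
    (hPP : ∀ f : H, P (P f) = P f)
    (hLP : ∀ f : H, L (P f) = P (L f))
    (hcoerc : ∀ f : H, (inner ℂ (L f) f : ℂ).re ≤ -μ * ‖P f‖ ^ 2)
    (χ₁ : H) (hχP : P χ₁ = χ₁) (hχnorm : ‖χ₁‖ = 1)
    (R : ℂ → H →L[ℂ] H)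
    (hR : ∀ lam : ℂ, -μ < lam.re → ∀ f : H, P f = f →
      R lam (L f - lam • f) = f ∧
      L (R lam f) - lam • R lam f = f ∧ P (R lam f) = R lam f)
    (a₀ : ℝ) (ha₀ : a₀ = min μ (-(inner ℂ χ₁ (R 0 χ₁) : ℂ).re)) (ha₀pos : 0 < a₀) :
    ∀ lam : ℂ, -(a₀ / 2) < lam.re → lam ≠ (inner ℂ χ₁ (R lam χ₁) : ℂ) :=
  complex_dispersion_function_no_fixed_point_general μ L P hLsa hcoerc χ₁ hχP R hR a₀ ha₀ ha₀pos
end
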